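/- In the 2D Gaussian model x = s + n with C_s = [[1, c],[c, 1]], 0 < |c| < 1, C_n = σ²I, σ > 0, the expected mean squared error of the optimal estimator ŝ = C_s(C_s+σ²I)⁻¹x equals Tr(C_s − C_s(C_s+σ²I)⁻¹C_s), and this quantity is strictly decreasing in |c|. -/

import Mathlib

/-!
Each coordinate of the error `s - K (s + n)`, `K = C_s (C_s + C_n)⁻¹`, is a linear functional
`a ⬝ s + b ⬝ n` of the independent Gaussian vectors `s` and `n`, hence a centered Gaussian of
variance `aᵀ C_s a + bᵀ C_n b`. Summing over coordinates, the MSE is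
`tr((1 - K) C_s (1 - K)ᵀ + K C_n Kᵀ)`, which collapses to `tr(C_s - K C_s)` because
`K (C_s + C_n) = C_s`. For `C_s = [[1, c], [c, 1]]` and `C_n = σ²I` this trace is
`2σ² - 2σ⁴(1 + σ²) / ((1 + σ²)² - c²)`, which decreases as `c²` grows.
-/

open MeasureTheory ProbabilityTheory Matrix

/-- `s` is a centered Gaussian random vector with covariance matrix `C` under `μ`:
every linear functional of `s` has a (possibly degenerate) centered real Gaussian
distribution with the corresponding variance. -/
def IsCenteredGaussianVec {Ω : Type*} [MeasurableSpace Ω] (μ : Measure Ω)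
    {k : ℕ} (s : Ω → Fin k → ℝ) (C : Matrix (Fin k) (Fin k) ℝ) : Prop :=
  ∀ a : Fin k → ℝ,
    Measure.map (fun ω => ∑ i, a i * s ω i) μ =
      gaussianReal 0 (Real.toNNReal (a ⬝ᵥ C.mulVec a))

/-- The in-distribution expected MSE of the Bayes-optimal linear estimator in the 2D
Gaussian model with source covariance `[[1, c], [c, 1]]` and noise covariance `σ²I`. -/
noncomputable def mseF (σ c : ℝ) : ℝ :=
  (!![1, c; c, 1] -
      !![1, c; c, 1] * (!![1, c; c, 1] + σ ^ 2 • (1 : Matrix (Fin 2) (Fin 2) ℝ))⁻¹ *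
        !![1, c; c, 1]).trace


section Moments

variable {Ω : Type*} [MeasurableSpace Ω] {μ : Measure Ω}

lemma integral_sq_gaussianReal (v : NNReal) : ∫ x, x ^ 2 ∂gaussianReal 0 v = v := by
  rw [← variance_fun_id_gaussianReal (μ := 0),
    variance_of_integral_eq_zero aemeasurable_id' integral_id_gaussianReal]

lemma integrable_sq_of_map_eq_gaussianReal {f : Ω → ℝ} {v : NNReal}
    (hf : μ.map f = gaussianReal 0 v) : Integrable (fun ω => f ω ^ 2) μ := by
  have hfm : AEMeasurable f μ := .of_map_ne_zero (by simp [hf, NeZero.ne])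
  have h : Integrable (fun x : ℝ => x ^ 2) (μ.map f) := by
    rw [hf]; exact (memLp_id_gaussianReal 2).integrable_sq
  exact (integrable_map_measure (by fun_prop) hfm).mp h

lemma integral_sq_of_map_eq_gaussianReal {f : Ω → ℝ} {v : NNReal}
    (hf : μ.map f = gaussianReal 0 v) : ∫ ω, f ω ^ 2 ∂μ = v := by
  have hfm : AEMeasurable f μ := .of_map_ne_zero (by simp [hf, NeZero.ne])
  rw [← integral_sq_gaussianReal v, ← hf, integral_map hfm (by fun_prop)]

end Moments

section MatrixIdentities

variable {ι R : Type*} [Fintype ι] [CommRing R]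

lemma trace_mul_mul_transpose (A C : Matrix ι ι R) :
    (A * C * Aᵀ).trace = ∑ i, A i ⬝ᵥ C *ᵥ A i := by
  simp only [trace, diag, mul_mul_apply, transpose_transpose]

variable [DecidableEq ι]

lemma sub_mulVec_add_apply (K : Matrix ι ι R) (u v : ι → R) (i : ι) :
    u i - (K *ᵥ (u + v)) i = (1 - K) i ⬝ᵥ u + (-K) i ⬝ᵥ v := by
  change _ = ((1 - K) *ᵥ u) i + ((-K) *ᵥ v) i
  simp only [sub_mulVec, one_mulVec, neg_mulVec, mulVec_add, Pi.add_apply, Pi.sub_apply,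
    Pi.neg_apply]
  ring

lemma one_sub_mul_mul_transpose_add_neg_mul_mul_transpose {K Cs Cn : Matrix ι ι R}
    (hK : K * (Cs + Cn) = Cs) :
    (1 - K) * Cs * (1 - K)ᵀ + (-K) * Cn * (-K)ᵀ = Cs - K * Cs := by
  calc (1 - K) * Cs * (1 - K)ᵀ + (-K) * Cn * (-K)ᵀ
      = Cs - K * Cs - Cs * Kᵀ + K * (Cs + Cn) * Kᵀ := by
        simp only [transpose_sub, transpose_one, transpose_neg]; noncomm_ring
    _ = Cs - K * Cs := by rw [hK]; abel

end MatrixIdentities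

lemma Matrix.PosSemidef.dotProduct_mulVec_self_nonneg {ι : Type*} [Fintype ι]
    {C : Matrix ι ι ℝ} (hC : C.PosSemidef) (a : ι → ℝ) : 0 ≤ a ⬝ᵥ C *ᵥ a := by
  simpa using hC.dotProduct_mulVec_nonneg a

section Estimation

variable {Ω : Type*} [MeasurableSpace Ω] {μ : Measure Ω} {k : ℕ}
  {s n : Ω → Fin k → ℝ} {Cs Cn : Matrix (Fin k) (Fin k) ℝ}

lemma map_dotProduct_add_eq_gaussianReal (hs : IsCenteredGaussianVec μ s Cs)
    (hn : IsCenteredGaussianVec μ n Cn) (hCs : Cs.PosSemidef) (hCn : Cn.PosSemidef)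
    (hind : IndepFun s n μ) (a b : Fin k → ℝ) :
    μ.map (fun ω => a ⬝ᵥ s ω + b ⬝ᵥ n ω) =
      gaussianReal 0 (a ⬝ᵥ Cs *ᵥ a + b ⬝ᵥ Cn *ᵥ b).toNNReal := by
  have hind' : IndepFun (fun ω => a ⬝ᵥ s ω) (fun ω => b ⬝ᵥ n ω) μ :=
    hind.comp (φ := (a ⬝ᵥ ·)) (ψ := (b ⬝ᵥ ·)) (by fun_prop) (by fun_prop)
  rw [Real.toNNReal_add (hCs.dotProduct_mulVec_self_nonneg a)
    (hCn.dotProduct_mulVec_self_nonneg b), ← zero_add (0 : ℝ)]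
  exact gaussianReal_add_gaussianReal_of_indepFun hind' (hs a) (hn b)

theorem integral_sum_sq_sub_mulVec_add (hs : IsCenteredGaussianVec μ s Cs)
    (hn : IsCenteredGaussianVec μ n Cn) (hCs : Cs.PosSemidef) (hCn : Cn.PosSemidef)
    (hind : IndepFun s n μ) (hM : IsUnit (Cs + Cn).det) :
    ∫ ω, ∑ i, (s ω i - ((Cs * (Cs + Cn)⁻¹) *ᵥ (s ω + n ω)) i) ^ 2 ∂μ =
      (Cs - Cs * (Cs + Cn)⁻¹ * Cs).trace := by
  set K := Cs * (Cs + Cn)⁻¹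
  have hK : K * (Cs + Cn) = Cs := nonsing_inv_mul_cancel_right _ Cs hM
  have hmap (i : Fin k) :=
    map_dotProduct_add_eq_gaussianReal hs hn hCs hCn hind ((1 - K) i) ((-K) i)
  simp_rw [sub_mulVec_add_apply]
  rw [integral_finsetSum _ fun i _ => integrable_sq_of_map_eq_gaussianReal (hmap i)]
  simp_rw [integral_sq_of_map_eq_gaussianReal (hmap _), Real.coe_toNNReal _
    (add_nonneg (hCs.dotProduct_mulVec_self_nonneg _) (hCn.dotProduct_mulVec_self_nonneg _))]
  rw [Finset.sum_add_distrib, ← trace_mul_mul_transpose, ← trace_mul_mul_transpose, ← trace_add,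
    one_sub_mul_mul_transpose_add_neg_mul_mul_transpose hK]

end Estimation

lemma posSemidef_of_abs_le_one {c : ℝ} (hc : |c| ≤ 1) :
    (!![1, c; c, 1] : Matrix (Fin 2) (Fin 2) ℝ).PosSemidef := by
  refine .of_dotProduct_mulVec_nonneg ?_ fun a => ?_
  · ext i j; fin_cases i <;> fin_cases j <;> rfl
  · obtain ⟨hc₁, hc₂⟩ := abs_le.mp hc
    simp only [star_trivial, dotProduct, mulVec, Fin.sum_univ_two, of_apply, cons_val',
      cons_val_zero, cons_val_one, empty_val', cons_val_fin_one]
    nlinarith [sq_nonneg (a 0 + a 1), sq_nonneg (a 0 - a 1)]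

lemma mseF_eq {σ c : ℝ} (hc : |c| < 1) :
    mseF σ c = 2 * σ ^ 2 - 2 * σ ^ 4 * (1 + σ ^ 2) / ((1 + σ ^ 2) ^ 2 - c ^ 2) := by
  have hd : (1 + σ ^ 2) ^ 2 - c ^ 2 ≠ 0 := by
    nlinarith [abs_lt.mp hc, sq_nonneg σ]
  have hM : !![1, c; c, 1] + σ ^ 2 • (1 : Matrix (Fin 2) (Fin 2) ℝ) =
      !![1 + σ ^ 2, c; c, 1 + σ ^ 2] := by
    ext i j; fin_cases i <;> fin_cases j <;> simp [one_apply]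
  rw [mseF, hM, inv_def, adjugate_fin_two_of, det_fin_two_of, Ring.inverse_eq_inv']
  simp only [smul_of, smul_cons, smul_eq_mul, mul_neg, smul_empty, cons_mul, vecMul_cons,
    head_cons, one_smul, tail_cons, empty_vecMul, add_zero, add_cons, empty_add_empty, empty_mul,
    Equiv.symm_apply_apply, mul_one, of_sub_of, sub_cons, sub_self, zero_empty, trace_fin_two,
    of_apply, cons_val', cons_val_zero, cons_val_fin_one, cons_val_one]
  field_simp
  ring

lemma mseF_lt_mseF_of_abs_lt {σ c₁ c₂ : ℝ} (hσ : σ ≠ 0) (h₁₂ : |c₁| < |c₂|) (h₂ : |c₂| < 1) :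
    mseF σ c₂ < mseF σ c₁ := by
  have hsq : c₁ ^ 2 < c₂ ^ 2 := sq_lt_sq.mpr h₁₂
  have hd₂ : 0 < (1 + σ ^ 2) ^ 2 - c₂ ^ 2 := by nlinarith [abs_lt.mp h₂, sq_nonneg σ]
  rw [mseF_eq (h₁₂.trans h₂), mseF_eq h₂]
  gcongr

theorem stmt9_general {Ω : Type*} [MeasurableSpace Ω] (μ : Measure Ω)
    (c σ : ℝ) (hc1 : |c| < 1) (hσ : 0 < σ)
    (s n : Ω → Fin 2 → ℝ)
    (hs : IsCenteredGaussianVec μ s !![1, c; c, 1])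
    (hn : IsCenteredGaussianVec μ n (σ ^ 2 • (1 : Matrix (Fin 2) (Fin 2) ℝ)))
    (hindep : IndepFun s n μ)
    (x : Ω → Fin 2 → ℝ) (hx : ∀ ω, x ω = s ω + n ω) :
    (∫ ω, ∑ i, (s ω i -
        (!![1, c; c, 1] * (!![1, c; c, 1] + σ ^ 2 • (1 : Matrix (Fin 2) (Fin 2) ℝ))⁻¹).mulVec
          (x ω) i) ^ 2 ∂μ = mseF σ c) ∧
    (∀ c₁ c₂ : ℝ, 0 < |c₁| → |c₁| < |c₂| → |c₂| < 1 → mseF σ c₂ < mseF σ c₁) := by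
  have hCs := posSemidef_of_abs_le_one hc1.le
  have hCn : (σ ^ 2 • (1 : Matrix (Fin 2) (Fin 2) ℝ)).PosDef := PosDef.one.smul (by positivity)
  have hM : IsUnit (!![1, c; c, 1] + σ ^ 2 • (1 : Matrix (Fin 2) (Fin 2) ℝ)).det :=
    (isUnit_iff_isUnit_det _).mp (PosDef.posSemidef_add hCs hCn).isUnit
  refine ⟨?_, fun c₁ c₂ _ h₁₂ h₂ => mseF_lt_mseF_of_abs_lt hσ.ne' h₁₂ h₂⟩
  simp_rw [hx]
  exact integral_sum_sq_sub_mulVec_add hs hn hCs hCn.posSemidef hindep hM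

/-- In the 2D Gaussian model `x = s + n` with `C_s = [[1, c], [c, 1]]`, `0 < |c| < 1`,
`C_n = σ²I`, `σ > 0`: the expected mean squared error of the optimal estimator
`ŝ = C_s (C_s + σ²I)⁻¹ x` equals `Tr(C_s − C_s (C_s + σ²I)⁻¹ C_s)`, and this quantity is
strictly decreasing in `|c|`. -/
theorem stmt9 {Ω : Type*} [MeasurableSpace Ω] (μ : Measure Ω) [IsProbabilityMeasure μ]
    (c σ : ℝ) (hc0 : 0 < |c|) (hc1 : |c| < 1) (hσ : 0 < σ)
    (s n : Ω → Fin 2 → ℝ)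
    (hs : IsCenteredGaussianVec μ s !![1, c; c, 1])
    (hn : IsCenteredGaussianVec μ n (σ ^ 2 • (1 : Matrix (Fin 2) (Fin 2) ℝ)))
    (hms : Measurable s) (hmn : Measurable n) (hindep : IndepFun s n μ)
    (x : Ω → Fin 2 → ℝ) (hx : ∀ ω, x ω = s ω + n ω) :
    (∫ ω, ∑ i, (s ω i -
        (!![1, c; c, 1] * (!![1, c; c, 1] + σ ^ 2 • (1 : Matrix (Fin 2) (Fin 2) ℝ))⁻¹).mulVec
          (x ω) i) ^ 2 ∂μ = mseF σ c) ∧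
    (∀ c₁ c₂ : ℝ, 0 < |c₁| → |c₁| < |c₂| → |c₂| < 1 → mseF σ c₂ < mseF σ c₁) :=
  stmt9_general μ c σ hc1 hσ s n hs hn hindep x hx
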